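/- Let (X, 𝒜) be a measurable space, let μ and ν be measures on X, let B and B′ be measurable subsets of X with B ⊆ B′ and 0 < ν(B) < ∞, let A ⊆ B′ be measurable, and let u : X → ℝ be measurable with ∫_B |u| dν < ∞. Set m := ν(B)^{−1} ∫_B u dν. Then ∫_A |u(x) − m|² dμ(x) ≤ ν(B)^{−1} ∬_{B′×B′} |u(x) − u(y)|² dμ(x) dν(y). -/

import Mathlib

/-!
For each `x`, `u x - m` is the `ν`-average over `B` of `y ↦ u x - u y`, so Cauchy–Schwarz
(Jensen for the square) gives `(u x - m)² ≤ ν(B)⁻¹ ∫_B (u x - u y)² dν(y)`. Integrating over `A`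
against `μ` and enlarging `A` and `B` to `B'` gives the bound.
-/

open MeasureTheory
open scoped ENNReal

theorem sq_lintegral_le_measure_univ_mul_lintegral_sq {α : Type*} [MeasurableSpace α]
    (μ : Measure α) (f : α → ℝ≥0∞) :
    (∫⁻ a, f a ∂μ) ^ 2 ≤ μ Set.univ * ∫⁻ a, f a ^ 2 ∂μ := by
  -- A measurable minorant with the same integral reduces this to Hölder for measurable functions.
  obtain ⟨g, hg, hgf, hfg⟩ := exists_measurable_le_lintegral_eq μ f
  have hcs := ENNReal.lintegral_mul_le_Lp_mul_Lq μ .two_two hg.aemeasurable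
    (aemeasurable_const (b := (1 : ℝ≥0∞)))
  simp only [Pi.mul_apply, mul_one, lintegral_const, one_pow, one_mul, ENNReal.rpow_two,
    one_div] at hcs
  have hsqrt (x : ℝ≥0∞) : (x ^ (2⁻¹ : ℝ)) ^ 2 = x := by
    exact_mod_cast ENNReal.rpow_inv_natCast_pow two_ne_zero x
  calc (∫⁻ a, f a ∂μ) ^ 2 = (∫⁻ a, g a ∂μ) ^ 2 := by rw [hfg]
    _ ≤ ((∫⁻ a, g a ^ 2 ∂μ) ^ (2⁻¹ : ℝ) * μ Set.univ ^ (2⁻¹ : ℝ)) ^ 2 := by gcongr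
    _ = μ Set.univ * ∫⁻ a, g a ^ 2 ∂μ := by rw [mul_pow, hsqrt, hsqrt, mul_comm]
    _ ≤ μ Set.univ * ∫⁻ a, f a ^ 2 ∂μ := by gcongr with a; exact hgf a

theorem enorm_average_sq_le_laverage {α E : Type*} [MeasurableSpace α] [NormedAddCommGroup E]
    [NormedSpace ℝ E] (μ : Measure α) [IsFiniteMeasure μ] (f : α → E) :
    ‖⨍ a, f a ∂μ‖ₑ ^ 2 ≤ ⨍⁻ a, ‖f a‖ₑ ^ 2 ∂μ := by
  rcases eq_zero_or_neZero μ with rfl | hμ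
  · simp
  have hμ0 : μ Set.univ ≠ 0 := by simp [hμ.out]
  have hμtop : μ Set.univ ≠ ⊤ := measure_ne_top μ _
  calc ‖⨍ a, f a ∂μ‖ₑ ^ 2 = ((μ Set.univ)⁻¹ * ‖∫ a, f a ∂μ‖ₑ) ^ 2 := by
        rw [average_eq, enorm_smul, measureReal_def, ← ENNReal.toReal_inv,
          Real.enorm_of_nonneg ENNReal.toReal_nonneg,
          ENNReal.ofReal_toReal (ENNReal.inv_ne_top.2 hμ0)]
    _ ≤ ((μ Set.univ)⁻¹ * ∫⁻ a, ‖f a‖ₑ ∂μ) ^ 2 := by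
        gcongr; exact enorm_integral_le_lintegral_enorm f
    _ ≤ (μ Set.univ)⁻¹ ^ 2 * (μ Set.univ * ∫⁻ a, ‖f a‖ₑ ^ 2 ∂μ) := by
        rw [mul_pow]; gcongr; exact sq_lintegral_le_measure_univ_mul_lintegral_sq μ _
    _ = ⨍⁻ a, ‖f a‖ₑ ^ 2 ∂μ := by
        rw [laverage_eq, sq, mul_assoc, ENNReal.inv_mul_cancel_left hμ0 hμtop,
          ENNReal.div_eq_inv_mul]

theorem ofReal_sq_sub_setAverage_le {α : Type*} [MeasurableSpace α] {μ : Measure α} {s : Set α}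
    {f : α → ℝ} (hs₀ : μ s ≠ 0) (hs : μ s ≠ ∞) (hf : IntegrableOn f s μ) (c : ℝ) :
    ENNReal.ofReal ((c - ⨍ x in s, f x ∂μ) ^ 2) ≤
      (μ s)⁻¹ * ∫⁻ x in s, ENNReal.ofReal ((c - f x) ^ 2) ∂μ := by
  have : IsFiniteMeasure (μ.restrict s) := isFiniteMeasure_restrict.2 hs
  have : NeZero (μ.restrict s) := ⟨by simpa using hs₀⟩
  have hsub : c - ⨍ x in s, f x ∂μ = ⨍ x in s, (c - f x) ∂μ := by
    rw [average_eq (μ.restrict s) (fun x => c - f x), integral_sub (integrable_const c) hf,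
      smul_sub, ← average_eq, ← average_eq, average_const]
  have hofReal (t : ℝ) : ENNReal.ofReal (t ^ 2) = ‖t‖ₑ ^ 2 := by
    rw [Real.enorm_eq_ofReal_abs, ← ENNReal.ofReal_pow (abs_nonneg t), sq_abs]
  simp only [hsub, hofReal]
  rw [← ENNReal.div_eq_inv_mul, ← setLAverage_eq]
  exact enorm_average_sq_le_laverage _ _

theorem mean_oscillation_bound_general {X : Type*} [MeasurableSpace X] (μ ν : Measure X)
    (B B' A : Set X) (hBB' : B ⊆ B') (hAB' : A ⊆ B')
    (hν0 : 0 < ν B) (hνfin : ν B < ⊤)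
    (u : X → ℝ) (hint : IntegrableOn u B ν)
    (m : ℝ) (hm : m = (ν B).toReal⁻¹ * ∫ x in B, u x ∂ν) :
    ∫⁻ x in A, ENNReal.ofReal ((u x - m) ^ 2) ∂μ ≤
      (ν B)⁻¹ * ∫⁻ x in B', ∫⁻ y in B', ENNReal.ofReal ((u x - u y) ^ 2) ∂ν ∂μ := by
  have hm_avg : m = ⨍ x in B, u x ∂ν := by rw [hm, setAverage_eq, smul_eq_mul, measureReal_def]
  calc ∫⁻ x in A, ENNReal.ofReal ((u x - m) ^ 2) ∂μ
      ≤ ∫⁻ x in A, (ν B)⁻¹ * ∫⁻ y in B, ENNReal.ofReal ((u x - u y) ^ 2) ∂ν ∂μ :=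
        lintegral_mono fun x => hm_avg ▸ ofReal_sq_sub_setAverage_le hν0.ne' hνfin.ne hint (u x)
    _ = (ν B)⁻¹ * ∫⁻ x in A, ∫⁻ y in B, ENNReal.ofReal ((u x - u y) ^ 2) ∂ν ∂μ :=
        lintegral_const_mul' _ _ (ENNReal.inv_ne_top.2 hν0.ne')
    _ ≤ (ν B)⁻¹ * ∫⁻ x in B', ∫⁻ y in B', ENNReal.ofReal ((u x - u y) ^ 2) ∂ν ∂μ := by
        gcongr (ν B)⁻¹ * ?_
        exact (lintegral_mono fun x => lintegral_mono_set hBB').trans (lintegral_mono_set hAB')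

/-- **Cauchy–Schwarz mean-oscillation bound**: let `μ, ν` be measures on `X`, let
`B ⊆ B′` with `0 < ν(B) < ∞`, let `A ⊆ B′`, let `u` be measurable with `∫_B |u| dν < ∞`
and let `m` be the `ν`-average of `u` over `B`. Then
`∫_A |u(x) − m|² dμ(x) ≤ ν(B)⁻¹ ∬_{B′×B′} |u(x) − u(y)|² dμ(x) dν(y)`. -/
theorem mean_oscillation_bound {X : Type*} [MeasurableSpace X] (μ ν : Measure X)
    (B B' A : Set X) (hBmeas : MeasurableSet B) (hB'meas : MeasurableSet B')
    (hAmeas : MeasurableSet A) (hBB' : B ⊆ B') (hAB' : A ⊆ B')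
    (hν0 : 0 < ν B) (hνfin : ν B < ⊤)
    (u : X → ℝ) (hu : Measurable u) (hint : IntegrableOn u B ν)
    (m : ℝ) (hm : m = (ν B).toReal⁻¹ * ∫ x in B, u x ∂ν) :
    ∫⁻ x in A, ENNReal.ofReal ((u x - m) ^ 2) ∂μ ≤
      (ν B)⁻¹ * ∫⁻ x in B', ∫⁻ y in B', ENNReal.ofReal ((u x - u y) ^ 2) ∂ν ∂μ :=
  mean_oscillation_bound_general μ ν B B' A hBB' hAB' hν0 hνfin u hint m hm
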